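/- arXiv:2412.19137 — 3 statements merged into one kernel-verified Lean document; each statement's English description precedes it below -/
import Mathlib

section
/- Let a, b, c, d ∈ ℂ with ad − bc = 1, and let F : ℂ × (0,∞) → ℂ × ℝ be the map F(z,r) = (z'(z,r), r'(z,r)), where ℂ × ℝ is identified with Euclidean ℝ³. Then F is differentiable at every point (z,r) with r > 0, and its derivative is a conformal linear map with factor 1/D(z,r): for every vector v ∈ ℝ³, ‖DF₍z,r₎(v)‖ = ‖v‖ / D(z,r). Consequently ‖DF₍z,r₎(v)‖ / r'(z,r) = ‖v‖ / r for all v, i.e. F is an isometry of the hyperbolic metric ds² = (dr² + dx² + dy²)/r². -/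
open Complex

open ContinuousLinearMap

private lemma key' (w c v₁ : ℂ) (r v₂ : ℝ) :
    Complex.normSq ((starRingEnd ℂ w)^2*v₁ - (starRingEnd ℂ c)^2*(r:ℂ)^2*(starRingEnd ℂ v₁)
        + 2*(starRingEnd ℂ c)*(starRingEnd ℂ w)*(r:ℂ)*(v₂:ℂ))
      + ((Complex.normSq w - Complex.normSq c*r^2)*v₂ - 2*r*((c*(starRingEnd ℂ w))*v₁).re)^2
    = (Complex.normSq w + Complex.normSq c*r^2)^2 * (Complex.normSq v₁ + v₂^2) := by
  simp only [pow_two, Complex.normSq_apply, Complex.mul_re, Complex.mul_im, Complex.sub_re,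
    Complex.sub_im, Complex.add_re, Complex.add_im, Complex.ofReal_re, Complex.ofReal_im,
    Complex.conj_re, Complex.conj_im, Complex.re_ofNat, Complex.im_ofNat]
  ring


set_option maxHeartbeats 2000000 in
/-- The map `F(z,r) = (z'(z,r), r'(z,r))` is differentiable at any point with
`r > 0`, and its derivative is a conformal linear map with conformal factor `1/D(z,r)` for the
Euclidean norm on `ℝ³ ≅ ℂ × ℝ`; consequently `F` is an isometry of the hyperbolic metric. -/
theorem sl2_action_derivative_conformal (a b c d : ℂ) (h : a * d - b * c = 1)
    (z : ℂ) (r : ℝ) (hr : 0 < r) :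
    ∃ L : (ℂ × ℝ) →L[ℝ] (ℂ × ℝ),
      HasFDerivAt
        (fun p : ℂ × ℝ =>
          (((a * p.1 + b) * star (c * p.1 + d) + a * star c * (p.2 : ℂ) ^ 2) /
              ((‖c * p.1 + d‖ ^ 2 + ‖c‖ ^ 2 * p.2 ^ 2 : ℝ) : ℂ),
           p.2 / (‖c * p.1 + d‖ ^ 2 + ‖c‖ ^ 2 * p.2 ^ 2)))
        L (z, r) ∧
      (∀ v : ℂ × ℝ,
        Real.sqrt (‖(L v).1‖ ^ 2 + (L v).2 ^ 2) =
          Real.sqrt (‖v.1‖ ^ 2 + v.2 ^ 2) /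
            (‖c * z + d‖ ^ 2 + ‖c‖ ^ 2 * r ^ 2)) ∧
      (∀ v : ℂ × ℝ,
        Real.sqrt (‖(L v).1‖ ^ 2 + (L v).2 ^ 2) /
            (r / (‖c * z + d‖ ^ 2 + ‖c‖ ^ 2 * r ^ 2)) =
          Real.sqrt (‖v.1‖ ^ 2 + v.2 ^ 2) / r) := by
  set fstc : ℂ × ℝ →L[ℝ] ℂ := ContinuousLinearMap.fst ℝ ℂ ℝ with hfst
  set sndc : ℂ × ℝ →L[ℝ] ℝ := ContinuousLinearMap.snd ℝ ℂ ℝ with hsnd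
  set conjL : ℂ →L[ℝ] ℂ := Complex.conjCLE.toContinuousLinearMap with hconjL
  have hw : HasFDerivAt (fun p : ℂ × ℝ => c * p.1 + d) (c • fstc) ((z,r) : ℂ × ℝ) :=
    (hasFDerivAt_fst.const_mul c).add_const d
  have hwc : HasFDerivAt (fun p : ℂ × ℝ => (starRingEnd ℂ) (c * p.1 + d))
      (conjL.comp (c • fstc)) ((z,r) : ℂ × ℝ) :=
    (conjL.hasFDerivAt).comp ((z,r) : ℂ × ℝ) hw
  have hN1 : HasFDerivAt (fun p : ℂ × ℝ => (a * p.1 + b) * (starRingEnd ℂ) (c * p.1 + d))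
      ((a * z + b) • (conjL.comp (c • fstc)) + (starRingEnd ℂ) (c * z + d) • (a • fstc))
      ((z,r) : ℂ × ℝ) :=
    ((hasFDerivAt_fst.const_mul a).add_const b).mul hwc
  have hof : HasFDerivAt (fun p : ℂ × ℝ => ((p.2 : ℝ) : ℂ)) (Complex.ofRealCLM.comp sndc)
      ((z,r) : ℂ × ℝ) :=
    (Complex.ofRealCLM.hasFDerivAt).comp ((z,r) : ℂ × ℝ) hasFDerivAt_snd
  have hN2 : HasFDerivAt
      (fun p : ℂ × ℝ => a * (starRingEnd ℂ) c * (((p.2 : ℝ) : ℂ) * ((p.2 : ℝ) : ℂ)))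
      ((a * (starRingEnd ℂ) c) • ((r:ℂ) • (Complex.ofRealCLM.comp sndc)
        + (r:ℂ) • (Complex.ofRealCLM.comp sndc))) ((z,r) : ℂ × ℝ) :=
    (hof.mul hof).const_mul _
  have hN := hN1.add hN2
  have hDre : HasFDerivAt (fun p : ℂ × ℝ => ((c * p.1 + d) * (starRingEnd ℂ) (c * p.1 + d)).re)
      (Complex.reCLM.comp ((c * z + d) • (conjL.comp (c • fstc))
        + (starRingEnd ℂ) (c * z + d) • (c • fstc))) ((z,r) : ℂ × ℝ) :=
    (Complex.reCLM.hasFDerivAt).comp ((z,r) : ℂ × ℝ) (hw.mul hwc)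
  have hDr2 : HasFDerivAt (fun p : ℂ × ℝ => Complex.normSq c * (p.2 * p.2))
      (Complex.normSq c • (r • sndc + r • sndc)) ((z,r) : ℂ × ℝ) :=
    ((hasFDerivAt_snd (𝕜 := ℝ) (E := ℂ) (F := ℝ) (p := ((z,r) : ℂ × ℝ))).mul
      hasFDerivAt_snd).const_mul (Complex.normSq c)
  have hD := hDre.add hDr2
  have hD0 : 0 < ((c * z + d) * (starRingEnd ℂ) (c * z + d)).re + Complex.normSq c * (r * r) := by
    rw [Complex.mul_conj, Complex.ofReal_re]
    rcases eq_or_ne c 0 with rfl | hc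
    · have hd : d ≠ 0 := by rintro rfl; simp at h
      simpa using Complex.normSq_pos.2 hd
    · have : 0 < Complex.normSq c * (r * r) := mul_pos (Complex.normSq_pos.2 hc) (mul_pos hr hr)
      nlinarith [Complex.normSq_nonneg (c * z + d)]
  have hDinv := (hasDerivAt_inv (ne_of_gt hD0)).comp_hasFDerivAt ((z,r) : ℂ × ℝ) hD
  have hF1 := hDinv.smul hN
  have hF2 := hasFDerivAt_snd.mul hDinv
  have hF := hF1.prodMk hF2
  refine ⟨_, hF.congr_of_eventuallyEq (Filter.Eventually.of_forall fun p => ?_), ?_, ?_⟩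
  · obtain ⟨p1, p2⟩ := p
    have e1 : ((c*p1+d) * (starRingEnd ℂ) (c*p1+d)).re + Complex.normSq c * (p2*p2)
        = ‖c*p1+d‖^2 + ‖c‖^2 * p2^2 := by
      rw [Complex.mul_conj, Complex.ofReal_re, ← Complex.sq_norm, ← Complex.sq_norm]; ring
    simp only [Function.comp, Prod.mk.injEq, Pi.add_apply, Pi.smul_apply', Pi.mul_apply]
    rw [e1]
    constructor
    · rw [Complex.real_smul, Complex.ofReal_inv, div_eq_mul_inv]
      simp [Complex.star_def, pow_two]; ring
    · rw [div_eq_mul_inv]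
  · intro v
    obtain ⟨v₁, v₂⟩ := v
    simp only [ContinuousLinearMap.prod_apply, ContinuousLinearMap.add_apply,
      ContinuousLinearMap.coe_smul', Pi.smul_apply, ContinuousLinearMap.coe_comp',
      Function.comp_apply, ContinuousLinearMap.coe_fst', ContinuousLinearMap.coe_snd',
      ContinuousLinearMap.smulRight_apply, ContinuousLinearEquiv.coe_coe,
      Complex.conjCLE_apply, Complex.ofRealCLM_apply, Complex.reCLM_apply, Function.comp,
      hfst, hsnd, hconjL, Pi.add_apply, Pi.mul_apply]
    have hDC : (((((c * z + d) * (starRingEnd ℂ) (c * z + d)).re + Complex.normSq c * (r * r)) : ℝ) : ℂ) ≠ 0 :=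
      Complex.ofReal_ne_zero.2 (ne_of_gt hD0)
    have hWre : ((((c * z + d) * (starRingEnd ℂ) (c * z + d)).re : ℝ) : ℂ)
        = (c * z + d) * (starRingEnd ℂ) (c * z + d) := by
      rw [Complex.mul_conj, Complex.ofReal_re]
    have hnsc : ((Complex.normSq c : ℝ) : ℂ) = c * (starRingEnd ℂ) c := (Complex.mul_conj c).symm
    have hE0 : (c * z + d) * (starRingEnd ℂ) (c * z + d) + c * (starRingEnd ℂ) c * ((r:ℂ) * (r:ℂ)) ≠ 0 := by
      intro h0
      apply hDC
      rw [Complex.ofReal_add, hWre, Complex.ofReal_mul, hnsc, Complex.ofReal_mul, h0]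
    have hXre : ((((c * z + d) * (starRingEnd ℂ) (c * v₁) + (starRingEnd ℂ) (c * z + d) * (c * v₁)).re : ℝ) : ℂ)
        = (c * z + d) * (starRingEnd ℂ) (c * v₁) + (starRingEnd ℂ) (c * z + d) * (c * v₁) := by
      rw [← Complex.conj_eq_iff_re]
      simp only [map_add, map_mul, Complex.conj_conj]
      ring
    have e1 : (((c * z + d) * (starRingEnd ℂ) (c * z + d)).re + Complex.normSq c * (r * r))⁻¹ •
        ((a * z + b) • (starRingEnd ℂ) (c • v₁) + (starRingEnd ℂ) (c * z + d) • a • v₁ +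
          (a * (starRingEnd ℂ) c) • ((r:ℂ) • (v₂:ℂ) + (r:ℂ) • (v₂:ℂ))) +
      (-((((c * z + d) * (starRingEnd ℂ) (c * z + d)).re + Complex.normSq c * (r * r)) ^ 2)⁻¹ •
          ((((c * z + d) • (starRingEnd ℂ) (c • v₁) + (starRingEnd ℂ) (c * z + d) • c • v₁).re +
            Complex.normSq c • (r • v₂ + r • v₂)) : ℝ)) •
        ((a * z + b) * (starRingEnd ℂ) (c * z + d) + a * (starRingEnd ℂ) c * ((r:ℂ) * (r:ℂ)))
      = ((((((c * z + d) * (starRingEnd ℂ) (c * z + d)).re + Complex.normSq c * (r * r)) ^ 2)⁻¹ : ℝ) : ℂ) *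
        ((starRingEnd ℂ) (c * z + d) ^ 2 * v₁ - (starRingEnd ℂ) c ^ 2 * (r:ℂ)^2 * (starRingEnd ℂ) v₁
          + 2 * (starRingEnd ℂ) c * (starRingEnd ℂ) (c * z + d) * (r:ℂ) * (v₂:ℂ)) := by
      simp only [smul_eq_mul, Complex.real_smul, Complex.ofReal_inv, Complex.ofReal_pow,
        Complex.ofReal_add, Complex.ofReal_mul, Complex.ofReal_neg]
      rw [hXre, hWre, hnsc]
      have hE0' : (c * z + d) * ((starRingEnd ℂ) c * (starRingEnd ℂ) z + (starRingEnd ℂ) d)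
          + c * (starRingEnd ℂ) c * ((r:ℂ) * (r:ℂ)) ≠ 0 := by
        simpa [map_add, map_mul] using hE0
      field_simp [hE0']
      congr 1
      simp only [map_add, map_mul]
      linear_combination ((((starRingEnd ℂ) c * (starRingEnd ℂ) z + (starRingEnd ℂ) d) ^ 2 * v₁ -
          (starRingEnd ℂ) c ^ 2 * (r:ℂ) ^ 2 * (starRingEnd ℂ) v₁ +
          2 * (starRingEnd ℂ) c * ((starRingEnd ℂ) c * (starRingEnd ℂ) z + (starRingEnd ℂ) d) * (r:ℂ) * (v₂:ℂ))) * h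
    have hS0 : 0 < Complex.normSq (c*z+d) + Complex.normSq c * (r*r) := by
      rwa [Complex.mul_conj, Complex.ofReal_re] at hD0
    have hXre2 : ((c * z + d) • (starRingEnd ℂ) (c • v₁) + (starRingEnd ℂ) (c * z + d) • c • v₁).re
        + Complex.normSq c • (r • v₂ + r • v₂)
        = 2*((c * (starRingEnd ℂ) (c*z+d)) * v₁).re + 2 * Complex.normSq c * r * v₂ := by
      simp only [smul_eq_mul, Complex.normSq_apply, Complex.mul_re, Complex.mul_im,
        Complex.add_re, Complex.add_im, Complex.conj_re, Complex.conj_im]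
      ring
    have e2 : r • -((((c * z + d) * (starRingEnd ℂ) (c * z + d)).re + Complex.normSq c * (r * r)) ^ 2)⁻¹ •
          (((c * z + d) • (starRingEnd ℂ) (c • v₁) + (starRingEnd ℂ) (c * z + d) • c • v₁).re +
            Complex.normSq c • (r • v₂ + r • v₂)) +
        ((((c * z + d) * (starRingEnd ℂ) (c * z + d)).re + Complex.normSq c * (r * r)))⁻¹ • v₂
      = (((((c * z + d) * (starRingEnd ℂ) (c * z + d)).re + Complex.normSq c * (r * r)) ^ 2)⁻¹) *
        ((Complex.normSq (c*z+d) - Complex.normSq c * r^2) * v₂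
          - 2*r*((c * (starRingEnd ℂ) (c*z+d)) * v₁).re) := by
      rw [hXre2, Complex.mul_conj, Complex.ofReal_re]
      have hS0' := ne_of_gt hS0
      simp only [smul_eq_mul]
      field_simp
      ring
    rw [e1, e2]
    have hre : (((c * z + d) * (starRingEnd ℂ) (c * z + d)).re + Complex.normSq c * (r * r))
        = Complex.normSq (c*z+d) + Complex.normSq c * (r*r) := by
      rw [Complex.mul_conj, Complex.ofReal_re]
    rw [hre]
    have hk := key' (c*z+d) c v₁ r v₂
    have hSne : Complex.normSq (c*z+d) + Complex.normSq c * (r*r) ≠ 0 := ne_of_gt hS0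
    have hin : ‖            ((((Complex.normSq (c*z+d) + Complex.normSq c * (r*r)) ^ 2)⁻¹ : ℝ) *
              ((starRingEnd ℂ) (c * z + d) ^ 2 * v₁ - (starRingEnd ℂ) c ^ 2 * (r:ℂ) ^ 2 * (starRingEnd ℂ) v₁ +
                2 * (starRingEnd ℂ) c * (starRingEnd ℂ) (c * z + d) * (r:ℂ) * (v₂:ℂ)))‖ ^ 2 +
        ((((Complex.normSq (c*z+d) + Complex.normSq c * (r*r)) ^ 2)⁻¹) *
            ((Complex.normSq (c * z + d) - Complex.normSq c * r ^ 2) * v₂ -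
              2 * r * (c * (starRingEnd ℂ) (c * z + d) * v₁).re)) ^ 2
        = (Complex.normSq v₁ + v₂^2) / (Complex.normSq (c*z+d) + Complex.normSq c * (r*r))^2 := by
      rw [norm_mul, Complex.norm_real, Real.norm_eq_abs, mul_pow, _root_.sq_abs, Complex.sq_norm]
      have hstep : (((Complex.normSq (c*z+d) + Complex.normSq c * (r*r))^2)⁻¹)^2 * Complex.normSq ((starRingEnd ℂ) (c * z + d) ^ 2 * v₁ - (starRingEnd ℂ) c ^ 2 * (r:ℂ) ^ 2 * (starRingEnd ℂ) v₁ +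
                2 * (starRingEnd ℂ) c * (starRingEnd ℂ) (c * z + d) * (r:ℂ) * (v₂:ℂ)) + (((Complex.normSq (c*z+d) + Complex.normSq c * (r*r))^2)⁻¹ * ((Complex.normSq (c * z + d) - Complex.normSq c * r ^ 2) * v₂ -
              2 * r * (c * (starRingEnd ℂ) (c * z + d) * v₁).re))^2
          = (Complex.normSq ((starRingEnd ℂ) (c * z + d) ^ 2 * v₁ - (starRingEnd ℂ) c ^ 2 * (r:ℂ) ^ 2 * (starRingEnd ℂ) v₁ +
                2 * (starRingEnd ℂ) c * (starRingEnd ℂ) (c * z + d) * (r:ℂ) * (v₂:ℂ)) + ((Complex.normSq (c * z + d) - Complex.normSq c * r ^ 2) * v₂ -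
              2 * r * (c * (starRingEnd ℂ) (c * z + d) * v₁).re)^2) * (((Complex.normSq (c*z+d) + Complex.normSq c * (r*r))^2)⁻¹)^2 := by ring
      rw [hstep, hk]
      field_simp
    rw [hin]
    rw [Real.sqrt_div (add_nonneg (Complex.normSq_nonneg _) (sq_nonneg _)), Real.sqrt_sq (le_of_lt hS0)]
    have habs : ‖c * z + d‖ ^ 2 + ‖c‖ ^ 2 * r ^ 2
        = Complex.normSq (c*z+d) + Complex.normSq c * (r*r) := by
      rw [Complex.sq_norm, Complex.sq_norm]; ring
    rw [habs, Complex.sq_norm]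


  · intro v
    obtain ⟨v₁, v₂⟩ := v
    simp only [ContinuousLinearMap.prod_apply, ContinuousLinearMap.add_apply,
      ContinuousLinearMap.coe_smul', Pi.smul_apply, ContinuousLinearMap.coe_comp',
      Function.comp_apply, ContinuousLinearMap.coe_fst', ContinuousLinearMap.coe_snd',
      ContinuousLinearMap.smulRight_apply, ContinuousLinearEquiv.coe_coe,
      Complex.conjCLE_apply, Complex.ofRealCLM_apply, Complex.reCLM_apply, Function.comp,
      hfst, hsnd, hconjL, Pi.add_apply, Pi.mul_apply]
    have hDC : (((((c * z + d) * (starRingEnd ℂ) (c * z + d)).re + Complex.normSq c * (r * r)) : ℝ) : ℂ) ≠ 0 :=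
      Complex.ofReal_ne_zero.2 (ne_of_gt hD0)
    have hWre : ((((c * z + d) * (starRingEnd ℂ) (c * z + d)).re : ℝ) : ℂ)
        = (c * z + d) * (starRingEnd ℂ) (c * z + d) := by
      rw [Complex.mul_conj, Complex.ofReal_re]
    have hnsc : ((Complex.normSq c : ℝ) : ℂ) = c * (starRingEnd ℂ) c := (Complex.mul_conj c).symm
    have hE0 : (c * z + d) * (starRingEnd ℂ) (c * z + d) + c * (starRingEnd ℂ) c * ((r:ℂ) * (r:ℂ)) ≠ 0 := by
      intro h0
      apply hDC
      rw [Complex.ofReal_add, hWre, Complex.ofReal_mul, hnsc, Complex.ofReal_mul, h0]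
    have hXre : ((((c * z + d) * (starRingEnd ℂ) (c * v₁) + (starRingEnd ℂ) (c * z + d) * (c * v₁)).re : ℝ) : ℂ)
        = (c * z + d) * (starRingEnd ℂ) (c * v₁) + (starRingEnd ℂ) (c * z + d) * (c * v₁) := by
      rw [← Complex.conj_eq_iff_re]
      simp only [map_add, map_mul, Complex.conj_conj]
      ring
    have e1 : (((c * z + d) * (starRingEnd ℂ) (c * z + d)).re + Complex.normSq c * (r * r))⁻¹ •
        ((a * z + b) • (starRingEnd ℂ) (c • v₁) + (starRingEnd ℂ) (c * z + d) • a • v₁ +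
          (a * (starRingEnd ℂ) c) • ((r:ℂ) • (v₂:ℂ) + (r:ℂ) • (v₂:ℂ))) +
      (-((((c * z + d) * (starRingEnd ℂ) (c * z + d)).re + Complex.normSq c * (r * r)) ^ 2)⁻¹ •
          ((((c * z + d) • (starRingEnd ℂ) (c • v₁) + (starRingEnd ℂ) (c * z + d) • c • v₁).re +
            Complex.normSq c • (r • v₂ + r • v₂)) : ℝ)) •
        ((a * z + b) * (starRingEnd ℂ) (c * z + d) + a * (starRingEnd ℂ) c * ((r:ℂ) * (r:ℂ)))
      = ((((((c * z + d) * (starRingEnd ℂ) (c * z + d)).re + Complex.normSq c * (r * r)) ^ 2)⁻¹ : ℝ) : ℂ) *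
        ((starRingEnd ℂ) (c * z + d) ^ 2 * v₁ - (starRingEnd ℂ) c ^ 2 * (r:ℂ)^2 * (starRingEnd ℂ) v₁
          + 2 * (starRingEnd ℂ) c * (starRingEnd ℂ) (c * z + d) * (r:ℂ) * (v₂:ℂ)) := by
      simp only [smul_eq_mul, Complex.real_smul, Complex.ofReal_inv, Complex.ofReal_pow,
        Complex.ofReal_add, Complex.ofReal_mul, Complex.ofReal_neg]
      rw [hXre, hWre, hnsc]
      have hE0' : (c * z + d) * ((starRingEnd ℂ) c * (starRingEnd ℂ) z + (starRingEnd ℂ) d)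
          + c * (starRingEnd ℂ) c * ((r:ℂ) * (r:ℂ)) ≠ 0 := by
        simpa [map_add, map_mul] using hE0
      field_simp [hE0']
      congr 1
      simp only [map_add, map_mul]
      linear_combination ((((starRingEnd ℂ) c * (starRingEnd ℂ) z + (starRingEnd ℂ) d) ^ 2 * v₁ -
          (starRingEnd ℂ) c ^ 2 * (r:ℂ) ^ 2 * (starRingEnd ℂ) v₁ +
          2 * (starRingEnd ℂ) c * ((starRingEnd ℂ) c * (starRingEnd ℂ) z + (starRingEnd ℂ) d) * (r:ℂ) * (v₂:ℂ))) * h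
    have hS0 : 0 < Complex.normSq (c*z+d) + Complex.normSq c * (r*r) := by
      rwa [Complex.mul_conj, Complex.ofReal_re] at hD0
    have hXre2 : ((c * z + d) • (starRingEnd ℂ) (c • v₁) + (starRingEnd ℂ) (c * z + d) • c • v₁).re
        + Complex.normSq c • (r • v₂ + r • v₂)
        = 2*((c * (starRingEnd ℂ) (c*z+d)) * v₁).re + 2 * Complex.normSq c * r * v₂ := by
      simp only [smul_eq_mul, Complex.normSq_apply, Complex.mul_re, Complex.mul_im,
        Complex.add_re, Complex.add_im, Complex.conj_re, Complex.conj_im]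
      ring
    have e2 : r • -((((c * z + d) * (starRingEnd ℂ) (c * z + d)).re + Complex.normSq c * (r * r)) ^ 2)⁻¹ •
          (((c * z + d) • (starRingEnd ℂ) (c • v₁) + (starRingEnd ℂ) (c * z + d) • c • v₁).re +
            Complex.normSq c • (r • v₂ + r • v₂)) +
        ((((c * z + d) * (starRingEnd ℂ) (c * z + d)).re + Complex.normSq c * (r * r)))⁻¹ • v₂
      = (((((c * z + d) * (starRingEnd ℂ) (c * z + d)).re + Complex.normSq c * (r * r)) ^ 2)⁻¹) *
        ((Complex.normSq (c*z+d) - Complex.normSq c * r^2) * v₂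
          - 2*r*((c * (starRingEnd ℂ) (c*z+d)) * v₁).re) := by
      rw [hXre2, Complex.mul_conj, Complex.ofReal_re]
      have hS0' := ne_of_gt hS0
      simp only [smul_eq_mul]
      field_simp
      ring
    rw [e1, e2]
    have hre : (((c * z + d) * (starRingEnd ℂ) (c * z + d)).re + Complex.normSq c * (r * r))
        = Complex.normSq (c*z+d) + Complex.normSq c * (r*r) := by
      rw [Complex.mul_conj, Complex.ofReal_re]
    rw [hre]
    have hk := key' (c*z+d) c v₁ r v₂
    have hSne : Complex.normSq (c*z+d) + Complex.normSq c * (r*r) ≠ 0 := ne_of_gt hS0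
    have hin : ‖            ((((Complex.normSq (c*z+d) + Complex.normSq c * (r*r)) ^ 2)⁻¹ : ℝ) *
              ((starRingEnd ℂ) (c * z + d) ^ 2 * v₁ - (starRingEnd ℂ) c ^ 2 * (r:ℂ) ^ 2 * (starRingEnd ℂ) v₁ +
                2 * (starRingEnd ℂ) c * (starRingEnd ℂ) (c * z + d) * (r:ℂ) * (v₂:ℂ)))‖ ^ 2 +
        ((((Complex.normSq (c*z+d) + Complex.normSq c * (r*r)) ^ 2)⁻¹) *
            ((Complex.normSq (c * z + d) - Complex.normSq c * r ^ 2) * v₂ -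
              2 * r * (c * (starRingEnd ℂ) (c * z + d) * v₁).re)) ^ 2
        = (Complex.normSq v₁ + v₂^2) / (Complex.normSq (c*z+d) + Complex.normSq c * (r*r))^2 := by
      rw [norm_mul, Complex.norm_real, Real.norm_eq_abs, mul_pow, _root_.sq_abs, Complex.sq_norm]
      have hstep : (((Complex.normSq (c*z+d) + Complex.normSq c * (r*r))^2)⁻¹)^2 * Complex.normSq ((starRingEnd ℂ) (c * z + d) ^ 2 * v₁ - (starRingEnd ℂ) c ^ 2 * (r:ℂ) ^ 2 * (starRingEnd ℂ) v₁ +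
                2 * (starRingEnd ℂ) c * (starRingEnd ℂ) (c * z + d) * (r:ℂ) * (v₂:ℂ)) + (((Complex.normSq (c*z+d) + Complex.normSq c * (r*r))^2)⁻¹ * ((Complex.normSq (c * z + d) - Complex.normSq c * r ^ 2) * v₂ -
              2 * r * (c * (starRingEnd ℂ) (c * z + d) * v₁).re))^2
          = (Complex.normSq ((starRingEnd ℂ) (c * z + d) ^ 2 * v₁ - (starRingEnd ℂ) c ^ 2 * (r:ℂ) ^ 2 * (starRingEnd ℂ) v₁ +
                2 * (starRingEnd ℂ) c * (starRingEnd ℂ) (c * z + d) * (r:ℂ) * (v₂:ℂ)) + ((Complex.normSq (c * z + d) - Complex.normSq c * r ^ 2) * v₂ -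
              2 * r * (c * (starRingEnd ℂ) (c * z + d) * v₁).re)^2) * (((Complex.normSq (c*z+d) + Complex.normSq c * (r*r))^2)⁻¹)^2 := by ring
      rw [hstep, hk]
      field_simp
    rw [hin]
    rw [Real.sqrt_div (add_nonneg (Complex.normSq_nonneg _) (sq_nonneg _)), Real.sqrt_sq (le_of_lt hS0)]
    have habs : ‖c * z + d‖ ^ 2 + ‖c‖ ^ 2 * r ^ 2
        = Complex.normSq (c*z+d) + Complex.normSq c * (r*r) := by
      rw [Complex.sq_norm, Complex.sq_norm]; ring
    rw [habs, Complex.sq_norm]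


    field_simp
    exact mul_div_cancel_right₀ _ (by have hr2 : r^2 = r*r := sq r; rw [hr2]; exact hSne)
end

section
/- Let z₀ ∈ ℂ and K > 1, and define φ(z) = −2 log|z − z₀| − 2 log|log(|z − z₀|/K)| for 0 < |z − z₀| < K. Then: (i) for all z with 0 < |z − z₀| < K the Wirtinger derivative of φ is ∂_zφ(z) = −(1/(z − z₀)) · (1 + 1/log(|z − z₀|/K)); and (ii) the limit as δ → 0⁺ of the integral of |∂_zφ|² over the annulus {z : δ ≤ |z − z₀| ≤ Kδ} with respect to Lebesgue area measure equals 2π log K. (This is the paper's computation that for the field with cusp (puncture) asymptotics, (√−1/2)∬_{δ}^{|J₁|δ} ∂_zφ ∂_z̄φ dz ∧ dz̄ → 2π log|J₁|, allowing the Hermitian-metric term to be absorbed into the radius |J₁^{(j)}|δ of the regularizing circle around a puncture.) -/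
open Complex MeasureTheory Filter

/-- The Wirtinger derivative `∂_z u = (1/2)(∂_x u − i ∂_y u)` of a real-valued function on `ℂ`. -/
noncomputable def wirtingerDerivReal (φ : ℂ → ℝ) (z : ℂ) : ℂ :=
  (((fderiv ℝ φ z) 1 : ℝ) - Complex.I * (((fderiv ℝ φ z) Complex.I : ℝ) : ℂ)) / 2

noncomputable def Gaux (K : ℝ) (y : ℝ) : ℝ :=
  (Real.log y - Real.log K) + 2 * Real.log (Real.log K - Real.log y) -
    (Real.log y - Real.log K)⁻¹

lemma Gaux_hasDerivAt (K : ℝ) (y : ℝ) (hy : 0 < y) (hyK : y < K) :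
    HasDerivAt (Gaux K)
      (y * ((y ^ 2)⁻¹ * (1 + (Real.log y - Real.log K)⁻¹) ^ 2)) y := by
  have hy0 : y ≠ 0 := ne_of_gt hy
  have htlt : Real.log y < Real.log K := Real.log_lt_log hy hyK
  have ht0 : Real.log y - Real.log K ≠ 0 := by linarith
  have hKy0 : Real.log K - Real.log y ≠ 0 := by linarith
  have h1 : HasDerivAt (fun y => Real.log y - Real.log K) y⁻¹ y :=
    (Real.hasDerivAt_log hy0).sub_const _
  have h2 : HasDerivAt (fun y => Real.log K - Real.log y) (-y⁻¹) y :=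
    (Real.hasDerivAt_log hy0).const_sub _
  have h3 : HasDerivAt (fun y => Real.log (Real.log K - Real.log y))
      ((Real.log K - Real.log y)⁻¹ * -y⁻¹) y :=
    by have := (Real.hasDerivAt_log hKy0).comp y h2; exact this
  have h4 : HasDerivAt (fun y => (Real.log y - Real.log K)⁻¹)
      (-y⁻¹ / (Real.log y - Real.log K) ^ 2) y := h1.inv ht0
  have h5 : HasDerivAt (Gaux K) _ y := (h1.add (h3.const_mul 2)).sub h4
  convert h5 using 1
  have hsq : (Real.log y - Real.log K) ^ 2 ≠ 0 := pow_ne_zero _ ht0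
  have hKy : Real.log K - Real.log y = -(Real.log y - Real.log K) := by ring
  rw [hKy]
  field_simp
  ring

lemma ftc_aux (K : ℝ) (hK : 1 < K) (δ : ℝ) (hδ : 0 < δ) (hδ1 : δ < 1) :
    ∫ y in δ..(K * δ), y * ((y ^ 2)⁻¹ * (1 + (Real.log y - Real.log K)⁻¹) ^ 2) =
      Gaux K (K * δ) - Gaux K δ := by
  have hK0 : (0:ℝ) < K := lt_trans one_pos hK
  have hle : δ ≤ K * δ := by nlinarith
  have hmem : ∀ y ∈ Set.uIcc δ (K * δ), 0 < y ∧ y < K := by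
    intro y hy
    rw [Set.uIcc_of_le hle] at hy
    constructor
    · linarith [hy.1]
    · have : K * δ < K := by nlinarith
      linarith [hy.2]
  refine intervalIntegral.integral_eq_sub_of_hasDerivAt
    (fun y hy => Gaux_hasDerivAt K y (hmem y hy).1 (hmem y hy).2) ?_
  apply ContinuousOn.intervalIntegrable
  intro y hy
  obtain ⟨hy0, hyK⟩ := hmem y hy
  have hy0' : y ≠ 0 := ne_of_gt hy0
  have ht0 : Real.log y - Real.log K ≠ 0 := by
    have := Real.log_lt_log hy0 hyK; linarith
  apply ContinuousWithinAt.mul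
  · exact continuousWithinAt_id
  refine ContinuousWithinAt.mul ?_ ?_
  · exact ((continuousWithinAt_id.pow 2).inv₀ (pow_ne_zero _ hy0'))
  · exact (ContinuousWithinAt.pow (ContinuousWithinAt.add continuousWithinAt_const
      ((((Real.continuousAt_log hy0').continuousWithinAt).sub
        continuousWithinAt_const).inv₀ ht0)) 2)

lemma tendsto_diff_logs (c : ℝ) (hc : 0 < c) :
    Tendsto (fun L => Real.log (-L) - Real.log (c - L)) atBot (nhds 0) := by
  have h1 : Tendsto (fun L : ℝ => c / (-L) + 1) atBot (nhds 1) := by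
    have hn : Tendsto (fun x : ℝ => -x) atBot atTop := tendsto_neg_atBot_atTop
    have h0 := Tendsto.div_atTop (tendsto_const_nhds (x := c) (f := atBot)) hn
    simpa using h0.add (tendsto_const_nhds (x := (1:ℝ)))
  have h2 : Tendsto (fun L : ℝ => (c / (-L) + 1)⁻¹) atBot (nhds 1) := by
    simpa using h1.inv₀ one_ne_zero
  have h3 : Tendsto (fun L : ℝ => Real.log (c / (-L) + 1)) atBot (nhds 0) := by
    have := (Real.continuousAt_log one_ne_zero).tendsto.comp h1
    simpa [Function.comp_def] using this
  refine Tendsto.congr' ?_ (by simpa using h3.neg)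
  filter_upwards [eventually_lt_atBot (0:ℝ)] with L hL0
  have hnegL : 0 < -L := by linarith
  have hcL : 0 < c - L := by linarith
  have he : c / (-L) + 1 = (c - L) / (-L) := by
    rw [eq_div_iff (ne_of_gt hnegL), add_mul, div_mul_cancel₀ _ (ne_of_gt hnegL)]
    ring
  rw [he, Real.log_div (ne_of_gt hcL) (ne_of_gt hnegL)]
  ring

lemma tendsto_G_diff (K : ℝ) (hK : 1 < K) :
    Tendsto (fun δ => Gaux K (K * δ) - Gaux K δ) (nhdsWithin 0 (Set.Ioi 0))
      (nhds (Real.log K)) := by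
  have hK0 : (0:ℝ) < K := lt_trans one_pos hK
  have hL : Tendsto Real.log (nhdsWithin 0 (Set.Ioi 0)) atBot :=
    Real.tendsto_log_nhdsGT_zero
  -- the explicit form
  have hmain : Tendsto (fun L : ℝ => Real.log K +
      2 * (Real.log (-L) - Real.log (Real.log K - L)) - (L⁻¹ - (L - Real.log K)⁻¹))
      atBot (nhds (Real.log K)) := by
    have p1 : Tendsto (fun L : ℝ => L⁻¹) atBot (nhds 0) := by
      have h : Tendsto (fun x : ℝ => -x) atBot atTop := tendsto_neg_atBot_atTop
      have := (tendsto_inv_atTop_zero.comp h).neg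
      simpa [Function.comp_def, inv_neg] using this
    have p2 : Tendsto (fun L : ℝ => (L - Real.log K)⁻¹) atBot (nhds 0) :=
      (p1.comp (tendsto_atBot_add_const_right _ (-(Real.log K)) tendsto_id)).congr
        (fun L => by simp [sub_eq_add_neg])
    have p3 := tendsto_diff_logs (Real.log K) (Real.log_pos hK)
    have := ((tendsto_const_nhds (x := Real.log K) (f := atBot)).add
      (p3.const_mul 2)).sub (p1.sub p2)
    simpa using this
  have hcomp := hmain.comp hL
  refine Tendsto.congr' ?_ hcomp
  filter_upwards [self_mem_nhdsWithin, Ioo_mem_nhdsGT_of_mem (by norm_num : (0:ℝ) ∈ Set.Ico 0 1)]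
    with δ hδ hδ1
  have hδ0 : 0 < δ := hδ
  have hδlt1 : δ < 1 := hδ1.2
  have hlogδ : Real.log δ < 0 := Real.log_neg hδ0 hδlt1
  have hlogKδ : Real.log (K * δ) = Real.log K + Real.log δ :=
    Real.log_mul (ne_of_gt hK0) (ne_of_gt hδ0)
  simp only [Function.comp_apply, Gaux, hlogKδ]
  ring_nf

lemma wirt_formula (z₀ : ℂ) (K : ℝ) (hK : 1 < K) (φ : ℂ → ℝ)
    (hφ : ∀ z : ℂ, 0 < ‖z - z₀‖ → ‖z - z₀‖ < K →
      φ z = -2 * Real.log (‖z - z₀‖) -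
        2 * Real.log |Real.log (‖z - z₀‖ / K)|)
    (z : ℂ) (h1 : 0 < ‖z - z₀‖) (h2 : ‖z - z₀‖ < K) :
    wirtingerDerivReal φ z =
      -(1 / (z - z₀)) * (((1 + (Real.log (‖z - z₀‖ / K))⁻¹ : ℝ) : ℂ)) := by
  have hK0 : (0:ℝ) < K := lt_trans one_pos hK
  set w : ℂ := z - z₀ with hw
  have hw0 : w ≠ 0 := by
    intro h; rw [h] at h1; simp at h1
  set s : ℝ := Complex.normSq w with hs
  have hs0 : s ≠ 0 := by simpa [hs] using hw0
  set t : ℝ := Real.log (‖w‖) - Real.log K with ht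
  have htneg : t < 0 := by
    have := Real.log_lt_log h1 h2
    simpa [ht, sub_neg] using this
  have ht0 : t ≠ 0 := ne_of_lt htneg
  have htK : Real.log (‖w‖ / K) = t := by
    rw [ht, Real.log_div (ne_of_gt h1) (ne_of_gt hK0)]
  -- the local model ψ
  set ψ : ℂ → ℝ := fun z => -(Real.log (Complex.normSq (z - z₀))) -
      2 * Real.log (Real.log (Complex.normSq (z - z₀)) * (2:ℝ)⁻¹ - Real.log K) with hψ
  -- φ = ψ near z
  have heq : φ =ᶠ[nhds z] ψ := by
    have hopen : IsOpen {z : ℂ | 0 < ‖z - z₀‖ ∧ ‖z - z₀‖ < K} := by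
      have : {z : ℂ | 0 < ‖z - z₀‖ ∧ ‖z - z₀‖ < K}
          = (fun z => ‖z - z₀‖) ⁻¹' (Set.Ioo 0 K) := rfl
      rw [this]
      exact IsOpen.preimage (by continuity) isOpen_Ioo
    have hmem : {z : ℂ | 0 < ‖z - z₀‖ ∧ ‖z - z₀‖ < K} ∈ nhds z :=
      hopen.mem_nhds ⟨h1, h2⟩
    filter_upwards [hmem] with x hx
    rcases hx with ⟨hx1, hx2⟩
    rw [hφ x hx1 hx2, hψ]
    have e1 : Real.log (Complex.normSq (x - z₀)) = 2 * Real.log (‖x - z₀‖) := by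
      rw [← Complex.sq_norm, Real.log_pow]; push_cast; ring
    have e2 : Real.log |Real.log (‖x - z₀‖ / K)|
        = Real.log (Real.log (‖x - z₀‖) - Real.log K) := by
      rw [Real.log_abs, Real.log_div (ne_of_gt hx1) (ne_of_gt hK0)]
    show _ = -Real.log (Complex.normSq (x - z₀)) - 2 * Real.log (Real.log (Complex.normSq (x - z₀)) * (2:ℝ)⁻¹ - Real.log K)
    have e4 : Real.log (Complex.normSq (x - z₀)) * (2:ℝ)⁻¹ - Real.log K
        = Real.log (‖x - z₀‖) - Real.log K := by rw [e1]; ring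
    rw [e4, e1, e2]; ring
  -- derivative chain
  have hsub : HasFDerivAt (fun z : ℂ => z - z₀) (ContinuousLinearMap.id ℝ ℂ) z :=
    (hasFDerivAt_id z).sub_const z₀
  have hre : HasFDerivAt (fun w : ℂ => w.re) (Complex.reCLM : ℂ →L[ℝ] ℝ) w :=
    Complex.reCLM.hasFDerivAt
  have him : HasFDerivAt (fun w : ℂ => w.im) (Complex.imCLM : ℂ →L[ℝ] ℝ) w :=
    Complex.imCLM.hasFDerivAt
  have hnsq : HasFDerivAt Complex.normSq
      (w.re • (Complex.reCLM : ℂ →L[ℝ] ℝ) + w.re • (Complex.reCLM : ℂ →L[ℝ] ℝ) +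
        (w.im • (Complex.imCLM : ℂ →L[ℝ] ℝ) + w.im • (Complex.imCLM : ℂ →L[ℝ] ℝ))) w :=
    ((hre.mul hre).add (him.mul him)).congr_of_eventuallyEq
      (Filter.Eventually.of_forall fun x => Complex.normSq_apply x)
  have hN : HasFDerivAt (fun z : ℂ => Complex.normSq (z - z₀)) _ z := hnsq.comp z hsub
  have h3 : HasFDerivAt (fun z : ℂ => Real.log (Complex.normSq (z - z₀))) _ z :=
    HasDerivAt.comp_hasFDerivAt (h₂ := Real.log) z (Real.hasDerivAt_log hs0) hN
  have h4 : HasFDerivAt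
      (fun z : ℂ => Real.log (Complex.normSq (z - z₀)) * (2:ℝ)⁻¹ - Real.log K) _ z :=
    (h3.mul_const ((2:ℝ)⁻¹)).sub_const (Real.log K)
  have hval : Real.log (Complex.normSq (z - z₀)) * (2:ℝ)⁻¹ - Real.log K = t := by
    rw [ht, hw]
    have : Real.log (Complex.normSq (z - z₀)) = 2 * Real.log (‖z - z₀‖) := by
      rw [← Complex.sq_norm, Real.log_pow]; push_cast; ring
    rw [this]; ring
  have hlog : HasDerivAt Real.log t⁻¹
      (Real.log (Complex.normSq (z - z₀)) * (2:ℝ)⁻¹ - Real.log K) := by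
    rw [hval]; exact Real.hasDerivAt_log ht0
  have h5 : HasFDerivAt
      (fun z : ℂ => Real.log (Real.log (Complex.normSq (z - z₀)) * (2:ℝ)⁻¹ - Real.log K)) _ z :=
    HasDerivAt.comp_hasFDerivAt (h₂ := Real.log) z hlog h4
  have hψd : HasFDerivAt ψ _ z := (h3.neg).sub (h5.const_mul 2)
  have hφd := hψd.congr_of_eventuallyEq heq
  have hfd := hφd.fderiv
  rw [wirtingerDerivReal, hfd]
  simp only [ContinuousLinearMap.coe_comp', Function.comp_apply, ContinuousLinearMap.smul_apply,
    ContinuousLinearMap.add_apply, ContinuousLinearMap.sub_apply, ContinuousLinearMap.neg_apply,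
    ContinuousLinearMap.id_apply, Complex.reCLM_apply, Complex.imCLM_apply, smul_eq_mul,
    Complex.one_re, Complex.one_im, Complex.I_re, Complex.I_im]
  rw [htK]
  have hconj : ((starRingEnd ℂ) w) = (w.re:ℂ) - (w.im:ℂ)*Complex.I := by
    simp [Complex.ext_iff]
  have hinv : (1:ℂ)/w = ((w.re:ℂ) - (w.im:ℂ)*Complex.I) * ((s:ℝ):ℂ)⁻¹ := by
    rw [one_div, Complex.inv_def, hconj, hs]; norm_cast
  rw [hinv]
  have hsC : ((s:ℝ):ℂ) ≠ 0 := by exact_mod_cast hs0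
  have htC : ((t:ℝ):ℂ) ≠ 0 := by exact_mod_cast ht0
  push_cast
  simp only [← hw, ← hs]
  field_simp
  ring

lemma annulus_integral_eq (z₀ : ℂ) (K : ℝ) (hK : 1 < K) (δ : ℝ) (hδ0 : 0 < δ) (hδ1 : δ < 1)
    (f : ℂ → ℝ)
    (hf : ∀ z ∈ {z : ℂ | δ ≤ ‖z - z₀‖ ∧ ‖z - z₀‖ ≤ K * δ},
      f z = ((‖z - z₀‖) ^ 2)⁻¹ *
        (1 + (Real.log (‖z - z₀‖) - Real.log K)⁻¹) ^ 2) :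
    (∫ z in {z : ℂ | δ ≤ ‖z - z₀‖ ∧ ‖z - z₀‖ ≤ K * δ}, f z)
      = 2 * Real.pi * (Gaux K (K * δ) - Gaux K δ) := by
  have hK0 : (0:ℝ) < K := lt_trans one_pos hK
  have hle : δ ≤ K * δ := by nlinarith
  set g : ℝ → ℝ := fun y => ((y:ℝ) ^ 2)⁻¹ * (1 + (Real.log y - Real.log K)⁻¹) ^ 2 with hg
  set S : Set ℂ := {z : ℂ | δ ≤ ‖z - z₀‖ ∧ ‖z - z₀‖ ≤ K * δ} with hS
  have hSpre : S = (fun z : ℂ => ‖z - z₀‖) ⁻¹' (Set.Icc δ (K * δ)) := rfl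
  have habs : Continuous (fun z : ℂ => ‖z - z₀‖) := by continuity
  have hSm : MeasurableSet S := by
    rw [hSpre]; exact habs.measurable measurableSet_Icc
  have step1 : (∫ z in S, f z) = ∫ z in S, g (‖z - z₀‖) := by
    refine setIntegral_congr_fun hSm (fun z hz => ?_)
    rw [hf z hz]
  have step2 : (∫ z in S, g (‖z - z₀‖))
      = ∫ z : ℂ, (Set.Icc δ (K * δ)).indicator g (‖z - z₀‖) := by
    rw [← integral_indicator hSm]
    congr 1
  have step3 : (∫ z : ℂ, (Set.Icc δ (K * δ)).indicator g (‖z - z₀‖))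
      = ∫ z : ℂ, (Set.Icc δ (K * δ)).indicator g (‖z‖) :=
    integral_sub_right_eq_self (fun z => (Set.Icc δ (K * δ)).indicator g (‖z‖)) z₀
  have step4 : (∫ z : ℂ, (Set.Icc δ (K * δ)).indicator g (‖z‖))
      = 2 * (Real.pi * ∫ y in Set.Ioi (0:ℝ), y • (Set.Icc δ (K * δ)).indicator g y) := by
    have h4 := MeasureTheory.integral_fun_norm_addHaar (volume : Measure ℂ)
      ((Set.Icc δ (K * δ)).indicator g)
    rw [h4, Complex.finrank_real_complex]
    simp [measureReal_def, ENNReal.toReal_mul, smul_eq_mul, NNReal.coe_real_pi]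
  have step5 : (∫ y in Set.Ioi (0:ℝ), y • (Set.Icc δ (K * δ)).indicator g y)
      = Gaux K (K * δ) - Gaux K δ := by
    have hind : ∀ y : ℝ, y • (Set.Icc δ (K * δ)).indicator g y
        = (Set.Icc δ (K * δ)).indicator (fun y => y * g y) y := by
      intro y
      by_cases hy : y ∈ Set.Icc δ (K * δ) <;> simp [hy]
    simp_rw [hind]
    have hsub : Set.Ioi (0:ℝ) ∩ Set.Icc δ (K * δ) = Set.Icc δ (K * δ) :=
      Set.inter_eq_self_of_subset_right (fun y hy => lt_of_lt_of_le hδ0 hy.1)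
    rw [setIntegral_indicator measurableSet_Icc, hsub,
      integral_Icc_eq_integral_Ioc, ← intervalIntegral.integral_of_le hle]
    exact ftc_aux K hK δ hδ0 hδ1
  rw [step1, step2, step3, step4, step5]
  ring

/-- For the cusp profile `φ(z) = −2 log|z−z₀| − 2 log|log(|z−z₀|/K)|` on
`0 < |z−z₀| < K`, the Wirtinger derivative is
`∂_zφ(z) = −(1/(z−z₀))·(1 + 1/log(|z−z₀|/K))`, and the integral of `|∂_zφ|²` over the annulus
`δ ≤ |z−z₀| ≤ Kδ` tends to `2π log K` as `δ → 0⁺`. -/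
theorem cusp_profile_kinetic_annulus_integral (z₀ : ℂ) (K : ℝ) (hK : 1 < K) (φ : ℂ → ℝ)
    (hφ : ∀ z : ℂ, 0 < ‖z - z₀‖ → ‖z - z₀‖ < K →
      φ z = -2 * Real.log (‖z - z₀‖) -
        2 * Real.log |Real.log (‖z - z₀‖ / K)|) :
    (∀ z : ℂ, 0 < ‖z - z₀‖ → ‖z - z₀‖ < K →
      wirtingerDerivReal φ z =
        -(1 / (z - z₀)) *
          (((1 + (Real.log (‖z - z₀‖ / K))⁻¹ : ℝ) : ℂ))) ∧
    Tendsto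
      (fun δ : ℝ =>
        ∫ z in {z : ℂ | δ ≤ ‖z - z₀‖ ∧ ‖z - z₀‖ ≤ K * δ},
          ‖wirtingerDerivReal φ z‖ ^ 2)
      (nhdsWithin 0 (Set.Ioi 0)) (nhds (2 * Real.pi * Real.log K)) := by
  have hK0 : (0:ℝ) < K := lt_trans one_pos hK
  have hw := wirt_formula z₀ K hK φ hφ
  refine ⟨hw, ?_⟩
  have hmain := (tendsto_G_diff K hK).const_mul (2 * Real.pi)
  refine Tendsto.congr' ?_ hmain
  filter_upwards [self_mem_nhdsWithin,
    Ioo_mem_nhdsGT_of_mem (show (0:ℝ) ∈ Set.Ico 0 1 by norm_num)] with δ hδ0' hδ1'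
  have hδ0 : (0:ℝ) < δ := hδ0'
  have hδ1 : δ < 1 := hδ1'.2
  refine Eq.symm (annulus_integral_eq z₀ K hK δ hδ0 hδ1 _ ?_)
  intro z hz
  have hz0 : 0 < ‖z - z₀‖ := lt_of_lt_of_le hδ0 hz.1
  have hzK : ‖z - z₀‖ < K := lt_of_le_of_lt hz.2 (by nlinarith)
  rw [hw z hz0 hzK]
  have habs : ‖-(1 / (z - z₀)) *
        (((1 + (Real.log (‖z - z₀‖ / K))⁻¹ : ℝ) : ℂ))‖
      = (‖z - z₀‖)⁻¹ * |1 + (Real.log (‖z - z₀‖ / K))⁻¹| := by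
    rw [norm_mul, norm_neg, norm_div, norm_one, Complex.norm_real, Real.norm_eq_abs, one_div]
  rw [habs, mul_pow, sq_abs, inv_pow,
    Real.log_div (ne_of_gt hz0) (ne_of_gt hK0)]
end

section
/- Let X be a locally compact, second-countable, Hausdorff topological space, and let G be a countable group acting on X by homeomorphisms such that the action is properly discontinuous: for every compact set L ⊆ X the set {g ∈ G : (g • L) ∩ L ≠ ∅} is finite. Then there exists a continuous function η : X → ℝ such that: (1) 0 ≤ η(x) ≤ 1 for all x ∈ X; (2) every point x ∈ X has an open neighborhood u and a finite subset S ⊆ G such that η vanishes identically on g • u for every g ∈ G \ S; and (3) for every x ∈ X, the sum ∑_{g ∈ G} η(g • x) — which has only finitely many nonzero terms by (2) — equals 1. -/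
open Filter Pointwise Function Set

/-- Kra's lemma: a countable group acting properly discontinuously by
homeomorphisms on a locally compact, second-countable Hausdorff space admits a continuous
partition of unity `η` subordinate to the action: `0 ≤ η ≤ 1`, every point has a neighborhood
on whose `g`-translates `η` vanishes for all but finitely many `g`, and
`∑_{g ∈ G} η(g • x) = 1` for every `x`. -/

theorem exists_group_partition_of_unity (X : Type*) [TopologicalSpace X]
    [LocallyCompactSpace X] [SecondCountableTopology X] [T2Space X]
    (G : Type*) [Group G] [Countable G] [MulAction G X]
    (hcont : ∀ g : G, Continuous fun x : X => g • x)
    (hproper : ∀ L : Set X, IsCompact L → {g : G | (g • L) ∩ L ≠ ∅}.Finite) :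
    ∃ η : X → ℝ, Continuous η ∧
      (∀ x : X, 0 ≤ η x ∧ η x ≤ 1) ∧
      (∀ x : X, ∃ u : Set X, IsOpen u ∧ x ∈ u ∧
        ∃ S : Finset G, ∀ g : G, g ∉ S → ∀ y ∈ u, η (g • y) = 0) ∧
      (∀ x : X, ∑ᶠ g : G, η (g • x) = 1) := by
  classical
  haveI : ContinuousConstSMul G X := ⟨hcont⟩
  have hfin : ∀ K M : Set X, IsCompact K → IsCompact M →
      {g : G | (((g • ·) '' K) ∩ M).Nonempty}.Finite := by
    intro K M hK hM
    refine (hproper (K ∪ M) (hK.union hM)).subset ?_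
    rintro g ⟨y, ⟨x, hx, rfl⟩, hyM⟩
    exact Set.nonempty_iff_ne_empty.mp
      ⟨g • x, Set.smul_mem_smul_set (Or.inl hx), Or.inr hyM⟩
  haveI : ProperlyDiscontinuousSMul G X :=
    ⟨fun hK hL => ((hfin _ _ hK hL).subset fun _ hg => hg)⟩
  haveI : LocallyCompactSpace (Quotient (MulAction.orbitRel G X)) :=
    MulAction.isOpenQuotientMap_quotientMk.locallyCompactSpace
  haveI : SecondCountableTopology (Quotient (MulAction.orbitRel G X)) :=
    ContinuousConstSMul.secondCountableTopology
  set π : X → Quotient (MulAction.orbitRel G X) := Quotient.mk (MulAction.orbitRel G X) with hπdef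
  have hπcont : Continuous π := continuous_quot_mk
  have hπ : ∀ (g : G) (y : X), π (g • y) = π y := fun g y => Quotient.sound ⟨g, rfl⟩
  -- relatively compact neighborhoods
  have hnbhd : ∀ x : X, ∃ u : Set X, IsOpen u ∧ x ∈ u ∧ IsCompact (closure u) := by
    intro x
    obtain ⟨K, hK, hKx⟩ := exists_compact_mem_nhds x
    exact ⟨interior K, isOpen_interior, mem_interior_iff_mem_nhds.2 hKx,
      hK.closure_of_subset interior_subset⟩
  choose u hu_open hu_mem hu_cpt using hnbhd
  -- partition of unity on the quotient
  set U : X → Set (Quotient (MulAction.orbitRel G X)) := fun i => π '' (u i) with hUdef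
  have hUopen : ∀ i, IsOpen (U i) := fun i => isOpenMap_quotient_mk'_mul _ (hu_open i)
  obtain ⟨p, hp⟩ := PartitionOfUnity.exists_isSubordinate (s := univ) isClosed_univ U hUopen
    (fun q _ => by
      obtain ⟨x, rfl⟩ := Quotient.exists_rep q
      exact Set.mem_iUnion.2 ⟨x, ⟨x, hu_mem x, rfl⟩⟩)
  -- bump functions
  have hbump : ∀ i : X, ∃ χ : C(X, ℝ), Set.EqOn χ 1 (closure (u i)) ∧ HasCompactSupport χ ∧
      ∀ y, χ y ∈ Set.Icc (0:ℝ) 1 := by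
    intro i
    obtain ⟨χ, h1, _, hc, h01⟩ := exists_continuous_one_zero_of_isCompact (hu_cpt i)
      isClosed_empty (Set.disjoint_empty _)
    exact ⟨χ, h1, hc, h01⟩
  choose χ hχ1 hχcpt hχ01 using hbump
  -- the summed bump and its properties
  set F : X → X → ℝ := fun i x => ∑ᶠ g : G, χ i (g • x) with hFdef
  have hsuppfin : ∀ (i x : X), (support fun g : G => χ i (g • x)).Finite := by
    intro i x
    refine (hfin {x} (tsupport (χ i)) isCompact_singleton (hχcpt i)).subset ?_
    intro g hg
    exact ⟨g • x, ⟨x, rfl, rfl⟩, subset_tsupport _ hg⟩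
  have hlocfinχ : ∀ i : X, LocallyFinite fun g : G => support fun x => χ i (g • x) := by
    intro i x
    obtain ⟨K, hK, hKx⟩ := exists_compact_mem_nhds x
    refine ⟨K, hKx, (hfin K (tsupport (χ i)) hK (hχcpt i)).subset ?_⟩
    rintro g ⟨y, hy, hyK⟩
    exact ⟨g • y, ⟨y, hyK, rfl⟩, subset_tsupport _ hy⟩
  have hFcont : ∀ i, Continuous (F i) :=
    fun i => continuous_finsum (fun g => (χ i).continuous.comp (hcont g)) (hlocfinχ i)
  have hFinv : ∀ (i : X) (g : G) (x : X), F i (g • x) = F i x := by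
    intro i g x
    have h1 : F i (g • x) = ∑ᶠ h : G, χ i ((Equiv.mulRight g h) • x) := by
      refine finsum_congr fun h => ?_
      simp [mul_smul]
    rw [h1, finsum_comp_equiv (Equiv.mulRight g) (f := fun h : G => χ i (h • x))]
  have hFnonneg : ∀ i x, 0 ≤ F i x := fun i x => finsum_nonneg fun g => (hχ01 i _).1
  have hFpos : ∀ i x, π x ∈ U i → 1 ≤ F i x := by
    intro i x hx
    obtain ⟨z, hz, hzx⟩ := hx
    obtain ⟨g, hg⟩ := Quotient.exact hzx
    have h1 : χ i (g • x) = 1 := by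
      have hgx : (g : G) • x = z := hg
      rw [hgx, hχ1 i (subset_closure hz)]; rfl
    calc (1:ℝ) = χ i (g • x) := h1.symm
    _ ≤ F i x := single_le_finsum g (hsuppfin i x) (fun h => (hχ01 i _).1)
  -- the translated pieces
  set f : X → X → ℝ := fun i x => p i (π x) * χ i x / F i x with hfdef
  have hfnonneg : ∀ i x, 0 ≤ f i x :=
    fun i x => div_nonneg (mul_nonneg (p.nonneg i _) (hχ01 i x).1) (hFnonneg i x)
  have hfp : ∀ i x, p i (π x) = 0 → f i x = 0 := by
    intro i x h; simp only [hfdef, h, zero_mul, zero_div]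
  have hfχ : ∀ i x, χ i x = 0 → f i x = 0 := by
    intro i x h; simp only [hfdef, h, mul_zero, zero_div]
  have hfcont : ∀ i, Continuous (f i) := by
    intro i
    rw [continuous_iff_continuousAt]
    intro x
    by_cases hx : π x ∈ tsupport (p i)
    · have hFx : 0 < F i x := lt_of_lt_of_le one_pos (hFpos i x (hp i hx))
      exact ((((p i).continuous.comp hπcont).continuousAt.mul
        (χ i).continuous.continuousAt).div (hFcont i).continuousAt hFx.ne')
    · have hW : (π ⁻¹' (tsupport (p i)))ᶜ ∈ nhds x :=
        ((isClosed_tsupport _).preimage hπcont).isOpen_compl.mem_nhds hx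
      refine Filter.EventuallyEq.continuousAt (y := 0) (Filter.eventually_of_mem hW ?_)
      intro y hy
      exact hfp i y (image_eq_zero_of_notMem_tsupport hy)
  have hlocfin_f : LocallyFinite fun i : X => support (f i) := by
    intro x
    obtain ⟨t, ht, hfint⟩ := p.locallyFinite (π x)
    refine ⟨π ⁻¹' t, hπcont.continuousAt.preimage_mem_nhds ht, hfint.subset ?_⟩
    rintro i ⟨y, hy, hyt⟩
    refine ⟨π y, ?_, hyt⟩
    intro h
    exact hy (hfp i y h)
  set η : X → ℝ := fun x => ∑ᶠ i : X, f i x with hηdef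
  have hηcont : Continuous η := continuous_finsum hfcont hlocfin_f
  have hηnonneg : ∀ x, 0 ≤ η x := fun x => finsum_nonneg fun i => hfnonneg i x
  -- master vanishing lemma
  have master : ∀ x : X, ∃ v : Set X, IsOpen v ∧ x ∈ v ∧ ∃ S : Finset G,
      ∀ g : G, g ∉ S → ∀ y ∈ v, ∀ i : X, f i (g • y) = 0 := by
    intro x
    obtain ⟨t, ht, hIfin⟩ := p.locallyFinite (π x)
    obtain ⟨W, hWt, hWopen, hWx⟩ := mem_nhds_iff.mp ht
    have hSfin : (⋃ i ∈ {i : X | (support (p i) ∩ t).Nonempty},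
        {g : G | (((g • ·) '' closure (u x)) ∩ tsupport (χ i)).Nonempty}).Finite :=
      hIfin.biUnion fun i _ => hfin _ _ (hu_cpt x) (hχcpt i)
    refine ⟨π ⁻¹' W ∩ u x, (hWopen.preimage hπcont).inter (hu_open x),
      ⟨hWx, hu_mem x⟩, hSfin.toFinset, ?_⟩
    rintro g hg y ⟨hyW, hyu⟩ i
    by_cases hpi : p i (π (g • y)) = 0
    · exact hfp i _ hpi
    · have hmem : π y ∈ support (p i) := by rwa [hπ g y] at hpi
      have hiI : i ∈ {i : X | (support (p i) ∩ t).Nonempty} := ⟨π y, hmem, hWt hyW⟩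
      refine hfχ i _ (by_contra fun h => ?_)
      refine hg (hSfin.mem_toFinset.2 (Set.mem_biUnion hiI ?_))
      exact ⟨g • y, ⟨y, subset_closure hyu, rfl⟩, subset_tsupport _ h⟩
  have hηzero : ∀ x : X, ∃ v : Set X, IsOpen v ∧ x ∈ v ∧ ∃ S : Finset G,
      ∀ g : G, g ∉ S → ∀ y ∈ v, η (g • y) = 0 := by
    intro x
    obtain ⟨v, hv, hxv, S, hS⟩ := master x
    refine ⟨v, hv, hxv, S, fun g hg y hy => ?_⟩
    simp only [hηdef]
    rw [finsum_congr (fun i => hS g hg y hy i)]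
    exact finsum_zero
  -- the sum over the group equals 1
  have hsum : ∀ x : X, ∑ᶠ g : G, η (g • x) = 1 := by
    intro x
    obtain ⟨v, hv, hxv, S, hS⟩ := master x
    have hTfin : (support fun i : X => p i (π x)).Finite :=
      (p.locallyFinite.point_finite (π x)).subset fun i hi => hi
    set T := hTfin.toFinset with hTdef
    have hsubT : ∀ g : G, (support fun i : X => f i (g • x)) ⊆ ↑T := by
      intro g i hi
      have : p i (π (g • x)) ≠ 0 := fun h => hi (hfp i _ h)
      rw [hπ g x] at this
      simpa [hTdef] using this
    have hsupf : ∀ i : X, (support fun g : G => f i (g • x)) ⊆ ↑S := by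
      intro i g hg
      by_contra h
      exact hg (hS g h x hxv i)
    have hsupη : (support fun g : G => η (g • x)) ⊆ ↑S := by
      intro g hg
      by_contra h
      refine hg ?_
      simp only [hηdef]
      rw [finsum_congr (fun i => hS g h x hxv i)]
      exact finsum_zero
    calc ∑ᶠ g : G, η (g • x) = ∑ g ∈ S, η (g • x) :=
          finsum_eq_sum_of_support_subset _ hsupη
      _ = ∑ g ∈ S, ∑ i ∈ T, f i (g • x) :=
          Finset.sum_congr rfl fun g _ => finsum_eq_sum_of_support_subset _ (hsubT g)
      _ = ∑ i ∈ T, ∑ g ∈ S, f i (g • x) := Finset.sum_comm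
      _ = ∑ i ∈ T, ∑ᶠ g : G, f i (g • x) :=
          Finset.sum_congr rfl fun i _ => (finsum_eq_sum_of_support_subset _ (hsupf i)).symm
      _ = ∑ i ∈ T, p i (π x) := by
          refine Finset.sum_congr rfl fun i hi => ?_
          have hstep : ∀ g : G, f i (g • x) = (p i (π x) / F i x) * χ i (g • x) := by
            intro g
            simp only [hfdef, hπ g x, hFinv i g x]
            ring
          rw [finsum_congr hstep, ← mul_finsum _ _]
          have hpi : p i (π x) ≠ 0 := by
            have := (hTfin.mem_toFinset).1 hi
            simpa using this
          have hFx : (0:ℝ) < F i x := by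
            refine lt_of_lt_of_le one_pos (hFpos i x ?_)
            exact hp i (subset_tsupport _ hpi)
          have hFeq : ∑ᶠ (a : G), (χ i) (a • x) = F i x := rfl
          rw [hFeq, div_mul_cancel₀ _ hFx.ne']
      _ = ∑ᶠ i : X, p i (π x) := by
          refine (finsum_eq_sum_of_support_subset _ ?_).symm
          intro i hi
          simpa [hTdef] using hi
      _ = 1 := p.sum_eq_one (Set.mem_univ _)
  refine ⟨η, hηcont, fun x => ⟨hηnonneg x, ?_⟩, hηzero, hsum⟩
  · obtain ⟨v, hv, hxv, S, hS⟩ := master x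
    have hsupη : (support fun g : G => η (g • x)) ⊆ ↑S := by
      intro g hg
      by_contra h
      refine hg ?_
      simp only [hηdef]
      rw [finsum_congr (fun i => hS g h x hxv i)]
      exact finsum_zero
    have h1 : η ((1:G) • x) ≤ ∑ᶠ g : G, η (g • x) :=
      single_le_finsum (1:G) (S.finite_toSet.subset hsupη) (fun g => hηnonneg _)
    rw [one_smul] at h1
    rw [hsum x] at h1
    exact h1
end
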